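/- Let n ≥ 2 and let λ_0, …, λ_n be pairwise distinct complex numbers, and let sq : ℙ(ℂ^{n+1}) → ℙ(ℂ^{n+1}) be the map [x_0 : ⋯ : x_n] ↦ [x_0² : ⋯ : x_n²]. For two points [x], [x′] of the Humbert–Edge curve C of type n, one has sq([x]) = sq([x′]) if and only if there exist s ∈ ℂ \ {0} and signs ε_0, …, ε_n ∈ {1, −1} such that x′_i = s·ε_i·x_i for all i. Moreover, if all homogeneous coordinates of [x] ∈ C are nonzero, then the set {[x′] ∈ C : sq([x′]) = sq([x])} has exactly 2^n elements, while if exactly one coordinate of [x] vanishes this set has exactly 2^{n−1} elements. -/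

import Mathlib

/-!
Squaring forgets exactly the signs of the coordinates: `[x_i²] = [x'_i²]` means
`x'_i² = s² x_i²` for one `s ≠ 0`, i.e. `x'_i = ± s x_i` coordinatewise. The equations of `C`
only involve the squares `x_i²`, so the whole fiber of `sq` through a point of `C` lies on `C`.
Normalising the sign at one nonzero coordinate `x_{i₀}` to `+1`, the points of the fiber are the
`[x]` with the signs of the other nonzero coordinates flipped along a subset `T`, and distinct
`T` give distinct points. A point with `m` nonzero coordinates therefore has a fiber of
`2^(m-1)` points: `2^n` when `m = n + 1`, and `2^(n-1)` when `m = n`.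
-/

/-- The Humbert–Edge curve of type `n` attached to the pairwise distinct complex numbers
`λ_0, …, λ_n`. -/
def humbertEdge (n : ℕ) (lam : Fin (n + 1) → ℂ) :
    Set (Projectivization ℂ (Fin (n + 1) → ℂ)) :=
  {P | ∀ k < n - 1, ∑ i, lam i ^ k * P.rep i ^ 2 = 0}

/-- The squaring map `sq : ℙ(ℂ^{n+1}) → ℙ(ℂ^{n+1})`, `[x_0 : ⋯ : x_n] ↦ [x_0² : ⋯ : x_n²]`. -/
noncomputable def sqMap (n : ℕ) (P : Projectivization ℂ (Fin (n + 1) → ℂ)) :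
    Projectivization ℂ (Fin (n + 1) → ℂ) :=
  Projectivization.mk ℂ (fun i => P.rep i ^ 2) (by
    intro h
    apply P.rep_nonzero
    funext i
    have h2 := congrFun h i
    simp only [Pi.zero_apply, pow_eq_zero_iff, ne_eq, OfNat.ofNat_ne_zero,
      not_false_iff] at h2
    simpa using h2)

open Finset Projectivization
open scoped LinearAlgebra.Projectivization

section Signs

variable {K ι : Type*} [Field K]

lemma exists_signs_of_mul_sq_eq [IsAlgClosed K] {v w : ι → K} {a : K} (ha : a ≠ 0)
    (h : ∀ i, a * v i ^ 2 = w i ^ 2) :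
    ∃ s : K, s ≠ 0 ∧ ∃ ε : ι → K, (∀ i, ε i = 1 ∨ ε i = -1) ∧ ∀ i, w i = s * ε i * v i := by
  classical
  obtain ⟨s, hs⟩ := IsAlgClosed.exists_pow_nat_eq a two_pos
  refine ⟨s, by rintro rfl; simp_all, fun i => if w i = s * v i then 1 else -1,
    fun i => by dsimp only; split_ifs <;> simp, fun i => ?_⟩
  have hsq : w i ^ 2 = (s * v i) ^ 2 := by rw [← h i, mul_pow, hs]
  dsimp only
  split_ifs with hi
  · rw [hi, mul_one]
  · rw [(sq_eq_sq_iff_eq_or_eq_neg.1 hsq).resolve_left hi]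
    ring

lemma eq_neg_of_ne_of_signs {ε δ : K} (hε : ε = 1 ∨ ε = -1) (hδ : δ = 1 ∨ δ = -1) (h : ε ≠ δ) :
    ε = -δ := by
  rcases hε with rfl | rfl <;> rcases hδ with rfl | rfl <;> simp_all

lemma fun_sq_ne_zero {v : ι → K} (hv : v ≠ 0) : (fun i => v i ^ 2) ≠ 0 := by
  contrapose! hv
  funext i
  simpa using congrFun hv i

variable [DecidableEq ι]

lemma piecewise_neg_sq (T : Finset ι) (x : ι → K) (i : ι) :
    T.piecewise (-x) x i ^ 2 = x i ^ 2 := by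
  by_cases hi : i ∈ T <;> simp [hi]

lemma piecewise_neg_ne_zero (T : Finset ι) {x : ι → K} (hx : x ≠ 0) : T.piecewise (-x) x ≠ 0 := by
  contrapose! hx
  funext i
  by_cases hi : i ∈ T <;> simpa [hi] using congrFun hx i

lemma injOn_mk_piecewise_neg [CharZero K] [Fintype ι] [DecidableEq K] {x : ι → K} (hx : x ≠ 0)
    {i₀ : ι} (h₀ : x i₀ ≠ 0) :
    Set.InjOn (fun T => mk K (T.piecewise (-x) x) (piecewise_neg_ne_zero T hx))
      (({i | x i ≠ 0} : Finset ι).erase i₀).powerset := by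
  intro T hT T' hT' hTT'
  simp only [coe_powerset, Set.mem_preimage, Set.mem_powerset_iff, coe_subset] at hT hT'
  obtain ⟨a, ha⟩ := (mk_eq_mk_iff' K _ _ _ _).1 hTT'
  have hi₀ : ∀ S ⊆ ({i | x i ≠ 0} : Finset ι).erase i₀, i₀ ∉ S := fun S hS h => by
    simpa using hS h
  have ha₁ : a = 1 := by
    have := congrFun ha i₀
    simp only [Pi.smul_apply, smul_eq_mul, piecewise_eq_of_notMem _ _ _ (hi₀ T hT),
      piecewise_eq_of_notMem _ _ _ (hi₀ T' hT')] at this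
    exact (mul_eq_right₀ h₀).1 this
  subst ha₁
  have hsupp : ∀ {S}, S ⊆ ({i | x i ≠ 0} : Finset ι).erase i₀ → ∀ {i}, i ∈ S → x i ≠ 0 :=
    fun hS _ h => (mem_filter.1 (mem_of_mem_erase (hS h))).2
  ext i
  have hi := congrFun ha i
  rw [one_smul] at hi
  by_cases hiT : i ∈ T <;> by_cases hiT' : i ∈ T'
  · simp [hiT, hiT']
  · rw [piecewise_eq_of_notMem _ _ _ hiT', piecewise_eq_of_mem _ _ _ hiT, Pi.neg_apply,
      CharZero.eq_neg_self_iff] at hi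
    exact absurd hi (hsupp hT hiT)
  · rw [piecewise_eq_of_mem _ _ _ hiT', piecewise_eq_of_notMem _ _ _ hiT, Pi.neg_apply,
      CharZero.neg_eq_self_iff] at hi
    exact absurd hi (hsupp hT' hiT')
  · simp [hiT, hiT']

lemma smul_piecewise_neg_eq_of_signs [Fintype ι] [DecidableEq K] {x ε : ι → K}
    (hε : ∀ i, ε i = 1 ∨ ε i = -1) (i₀ : ι) (s : K) :
    (s * ε i₀) • ({i | x i ≠ 0 ∧ ε i ≠ ε i₀} : Finset ι).piecewise (-x) x =
      fun i => s * ε i * x i := by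
  funext i
  by_cases hx : x i = 0
  · simp [hx]
  by_cases hεi : ε i = ε i₀
  · simp [hεi]
  · rw [Pi.smul_apply, piecewise_eq_of_mem _ _ _ (by simp [hx, hεi]),
      eq_neg_of_ne_of_signs (hε i) (hε i₀) hεi]
    simp

end Signs

section SqMap

variable {n : ℕ}

lemma sqMap_eq_sqMap_iff_exists_mul (P Q : ℙ ℂ (Fin (n + 1) → ℂ)) :
    sqMap n P = sqMap n Q ↔ ∃ a : ℂˣ, ∀ i, a * Q.rep i ^ 2 = P.rep i ^ 2 := by
  simp only [sqMap, mk_eq_mk_iff, funext_iff, Pi.smul_apply, Units.smul_def, smul_eq_mul]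

lemma sqMap_eq_sqMap_iff (P P' : ℙ ℂ (Fin (n + 1) → ℂ)) :
    sqMap n P = sqMap n P' ↔
      ∃ s : ℂ, s ≠ 0 ∧ ∃ ε : Fin (n + 1) → ℂ,
        (∀ i, ε i = 1 ∨ ε i = -1) ∧ ∀ i, P'.rep i = s * ε i * P.rep i := by
  rw [eq_comm, sqMap_eq_sqMap_iff_exists_mul]
  constructor
  · rintro ⟨a, ha⟩
    exact exists_signs_of_mul_sq_eq a.ne_zero ha
  · rintro ⟨s, hs, ε, hε, h⟩
    refine ⟨Units.mk0 _ (pow_ne_zero 2 hs), fun i => ?_⟩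
    have hε2 : ε i ^ 2 = 1 := by rcases hε i with h1 | h1 <;> simp [h1]
    simp only [Units.val_mk0, h i, mul_pow, hε2, mul_one]

lemma sqMap_mk (v : Fin (n + 1) → ℂ) (hv : v ≠ 0) :
    sqMap n (mk ℂ v hv) = mk ℂ (fun i => v i ^ 2) (fun_sq_ne_zero hv) := by
  obtain ⟨a, ha⟩ := exists_smul_eq_mk_rep ℂ v hv
  refine (mk_eq_mk_iff ℂ _ _ _ _).2 ⟨a ^ 2, funext fun i => ?_⟩
  simp [← ha, Units.smul_def, mul_pow]

lemma mem_humbertEdge_of_sqMap_eq {lam : Fin (n + 1) → ℂ} {P R : ℙ ℂ (Fin (n + 1) → ℂ)}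
    (hP : P ∈ humbertEdge n lam) (h : sqMap n R = sqMap n P) : R ∈ humbertEdge n lam := by
  obtain ⟨a, ha⟩ := (sqMap_eq_sqMap_iff_exists_mul R P).1 h
  intro k hk
  simp only [← ha, mul_left_comm _ (a : ℂ), ← mul_sum, hP k hk, mul_zero]

lemma sqMap_fiber_eq_image (P : ℙ ℂ (Fin (n + 1) → ℂ)) (i₀ : Fin (n + 1)) :
    {R | sqMap n R = sqMap n P} =
      (fun T => mk ℂ (T.piecewise (-P.rep) P.rep) (piecewise_neg_ne_zero T P.rep_nonzero)) ''
        (({i | P.rep i ≠ 0} : Finset _).erase i₀).powerset := by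
  ext R
  constructor
  · intro hR
    obtain ⟨s, hs, ε, hε, hR⟩ := (sqMap_eq_sqMap_iff P R).1 (Eq.symm hR)
    refine ⟨({i | P.rep i ≠ 0 ∧ ε i ≠ ε i₀} : Finset _), ?_, ?_⟩
    · rw [mem_coe, mem_powerset]
      intro i hi
      simp only [mem_filter, mem_univ, true_and, mem_erase] at hi ⊢
      exact ⟨fun h => hi.2 (h ▸ rfl), hi.1⟩
    · rw [← mk_rep R]
      refine ((mk_eq_mk_iff' ℂ _ _ _ _).2 ⟨s * ε i₀, ?_⟩).symm
      rw [smul_piecewise_neg_eq_of_signs hε]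
      exact funext fun i => (hR i).symm
  · rintro ⟨T, -, rfl⟩
    rw [Set.mem_ofPred_eq, sqMap_mk]
    simp only [piecewise_neg_sq]
    rfl

lemma ncard_sqMap_fiber (P : ℙ ℂ (Fin (n + 1) → ℂ)) :
    {R | sqMap n R = sqMap n P}.ncard = 2 ^ (#{i | P.rep i ≠ 0} - 1) := by
  obtain ⟨i₀, h₀⟩ : ∃ i, P.rep i ≠ 0 := Function.ne_iff.1 P.rep_nonzero
  rw [sqMap_fiber_eq_image P i₀, (injOn_mk_piecewise_neg P.rep_nonzero h₀).ncard_image,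
    Set.ncard_coe_finset, card_powerset, card_erase_of_mem (by simpa using h₀)]

end SqMap

theorem stmt_7_general (n : ℕ) (lam : Fin (n + 1) → ℂ)
    (P P' : Projectivization ℂ (Fin (n + 1) → ℂ))
    (hP : P ∈ humbertEdge n lam) :
    (sqMap n P = sqMap n P' ↔
      ∃ s : ℂ, s ≠ 0 ∧ ∃ ε : Fin (n + 1) → ℂ,
        (∀ i, ε i = 1 ∨ ε i = -1) ∧ ∀ i, P'.rep i = s * ε i * P.rep i) ∧
    ((∀ i, P.rep i ≠ 0) →
      {R ∈ humbertEdge n lam | sqMap n R = sqMap n P}.ncard = 2 ^ n) ∧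
    ((∃! i, P.rep i = 0) →
      {R ∈ humbertEdge n lam | sqMap n R = sqMap n P}.ncard = 2 ^ (n - 1)) := by
  have hfiber : {R ∈ humbertEdge n lam | sqMap n R = sqMap n P} = {R | sqMap n R = sqMap n P} :=
    Set.ext fun R => and_iff_right_of_imp (mem_humbertEdge_of_sqMap_eq hP)
  rw [hfiber, ncard_sqMap_fiber]
  refine ⟨sqMap_eq_sqMap_iff P P', fun hall => ?_, fun ⟨j, hj, huniq⟩ => ?_⟩
  · rw [filter_true_of_mem fun i _ => hall i]
    simp
  · have hsupp : ({i | P.rep i ≠ 0} : Finset _) = univ.erase j := by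
      ext i
      simpa [not_iff_not] using ⟨huniq i, fun h => h ▸ hj⟩
    rw [hsupp, card_erase_of_mem (mem_univ j)]
    simp

/-- Let `n ≥ 2` and `λ_0, …, λ_n` pairwise distinct complex numbers.  For
points `[x], [x']` of the Humbert–Edge curve `C` of type `n`, one has `sq [x] = sq [x']` if
and only if there exist `s ≠ 0` and signs `ε_i ∈ {1, -1}` with `x'_i = s ε_i x_i` for all
`i`.  Moreover, if all homogeneous coordinates of `[x] ∈ C` are nonzero then the fiber
`{[x'] ∈ C : sq [x'] = sq [x]}` has exactly `2^n` elements, while if exactly one coordinate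
of `[x]` vanishes this fiber has exactly `2^{n-1}` elements. -/
theorem stmt_7 (n : ℕ) (hn : 2 ≤ n) (lam : Fin (n + 1) → ℂ)
    (hlam : Function.Injective lam)
    (P P' : Projectivization ℂ (Fin (n + 1) → ℂ))
    (hP : P ∈ humbertEdge n lam) (hP' : P' ∈ humbertEdge n lam) :
    (sqMap n P = sqMap n P' ↔
      ∃ s : ℂ, s ≠ 0 ∧ ∃ ε : Fin (n + 1) → ℂ,
        (∀ i, ε i = 1 ∨ ε i = -1) ∧ ∀ i, P'.rep i = s * ε i * P.rep i) ∧
    ((∀ i, P.rep i ≠ 0) →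
      {R ∈ humbertEdge n lam | sqMap n R = sqMap n P}.ncard = 2 ^ n) ∧
    ((∃! i, P.rep i = 0) →
      {R ∈ humbertEdge n lam | sqMap n R = sqMap n P}.ncard = 2 ^ (n - 1)) :=
  stmt_7_general n lam P P' hP
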